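/- arXiv:2310.16705 — 3 statements merged into one kernel-verified Lean document; each statement's English description precedes it below -/
import Mathlib

section
/- Let f : ℝ → ℝ be convex, and g, h : Ω → ℝ measurable with g positive and integrable, h integrable. Then ∫ g(λ) f(h(λ)/g(λ)) dλ ≥ (∫ g dλ) · f((∫ h dλ)/(∫ g dλ)). -/
open MeasureTheory

/-- Supporting line for a convex function on `ℝ`. -/
lemma convex_support_line (f : ℝ → ℝ) (hf : ConvexOn ℝ Set.univ f) (t₀ : ℝ) :
    ∃ a : ℝ, ∀ t, f t₀ + a * (t - t₀) ≤ f t := by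
  set S : Set ℝ := (fun s => (f t₀ - f s) / (t₀ - s)) '' Set.Iio t₀ with hS
  have hne : S.Nonempty := ⟨_, ⟨t₀ - 1, by simp, rfl⟩⟩
  have hbdd : BddAbove S := by
    refine ⟨(f (t₀ + 1) - f t₀) / (t₀ + 1 - t₀), ?_⟩
    rintro _ ⟨s, hs, rfl⟩
    exact hf.slope_mono_adjacent trivial trivial hs (by linarith)
  refine ⟨sSup S, fun t => ?_⟩
  rcases lt_trichotomy t t₀ with ht | ht | ht
  · have h1 : (f t₀ - f t) / (t₀ - t) ≤ sSup S := le_csSup hbdd ⟨t, ht, rfl⟩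
    have h2 : 0 < t₀ - t := by linarith
    rw [div_le_iff₀ h2] at h1
    nlinarith
  · simp [ht]
  · have h1 : sSup S ≤ (f t - f t₀) / (t - t₀) := by
      refine csSup_le hne ?_
      rintro _ ⟨s, hs, rfl⟩
      exact hf.slope_mono_adjacent trivial trivial hs ht
    have h2 : 0 < t - t₀ := by linarith
    rw [le_div_iff₀ h2] at h1
    nlinarith

/-- Generalized continuous Jensen inequality (perspective-function form):
for a convex `f : ℝ → ℝ`, `g` positive a.e. and integrable, `h` integrable,
`∫ g f(h/g) ≥ (∫ g) f((∫ h)/(∫ g))`. -/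
theorem perspective_jensen {Ω : Type*} [MeasureSpace Ω]
    (f : ℝ → ℝ) (hf : ConvexOn ℝ Set.univ f)
    (g h : Ω → ℝ) (hg : Measurable g) (hh : Measurable h)
    (hgpos : ∀ᵐ x, 0 < g x)
    (hgi : Integrable g) (hhi : Integrable h)
    (hgI : 0 < ∫ x, g x)
    (hint : Integrable (fun x => g x * f (h x / g x))) :
    (∫ x, g x) * f ((∫ x, h x) / (∫ x, g x)) ≤
      ∫ x, g x * f (h x / g x) := by
  set t₀ : ℝ := (∫ x, h x) / (∫ x, g x) with ht₀
  obtain ⟨a, ha⟩ := convex_support_line f hf t₀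
  have hint2 : Integrable (fun x => f t₀ * g x + a * h x - a * t₀ * g x) := by
    exact ((hgi.const_mul _).add (hhi.const_mul _)).sub (hgi.const_mul _)
  have hle : (fun x => f t₀ * g x + a * h x - a * t₀ * g x) ≤ᵐ[volume]
      fun x => g x * f (h x / g x) := by
    filter_upwards [hgpos] with x hx
    have key := ha (h x / g x)
    have h2 : g x * (f t₀ + a * (h x / g x - t₀)) ≤ g x * f (h x / g x) :=
      mul_le_mul_of_nonneg_left key hx.le
    have h4 : g x * (f t₀ + a * (h x / g x - t₀)) =
        f t₀ * g x + a * h x - a * t₀ * g x := by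
      field_simp
      ring
    linarith [h2, h4.symm.trans_le h2]
  have hmain := integral_mono_ae hint2 hint hle
  have hI : ∫ x, (f t₀ * g x + a * h x - a * t₀ * g x) =
      f t₀ * (∫ x, g x) + a * (∫ x, h x) - a * t₀ * (∫ x, g x) := by
    have i1 : Integrable (fun x => f t₀ * g x + a * h x) := (hgi.const_mul _).add (hhi.const_mul _)
    have i2 : Integrable (fun x => a * t₀ * g x) := hgi.const_mul _
    rw [integral_sub i1 i2, integral_add (hgi.const_mul _) (hhi.const_mul _),
        integral_const_mul, integral_const_mul, integral_const_mul]
  have ht : t₀ * (∫ x, g x) = ∫ x, h x := by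
    rw [ht₀]; field_simp
  rw [hI] at hmain
  have h5 : a * (t₀ * ∫ x, g x) = a * ∫ x, h x := by rw [ht]
  linarith [hmain, h5]
end

section
/- For a one-dimensional Gaussian density q(z|μ,σ²) = N(z; μ, σ²) and a twice continuously differentiable f with polynomially bounded derivatives, ∂/∂(σ²) E_{z∼q}[f(z)] = (1/2) E_{z∼q}[f''(z)]. -/
open MeasureTheory

/-- One-dimensional Gaussian density `N(z; μ, v)` with variance `v`. -/
noncomputable def gauss1D (μ v z : ℝ) : ℝ :=
  (Real.sqrt (2 * Real.pi * v))⁻¹ * Real.exp (-(z - μ) ^ 2 / (2 * v))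

/-!
The Gaussian density solves the heat equation `∂_v q = ½ ∂_z² q`. Differentiating under the
integral sign (for `v/2 < s < 3v/2` the `s`-derivative is dominated by a polynomial times the
Gaussian of variance `3v/2`) and integrating by parts twice moves both `z`-derivatives onto `f`;
no boundary terms arise because every product involved is a polynomially bounded function times
a Gaussian, hence integrable.
-/

open Real

@[fun_prop]
def HasPolynomialGrowth (g : ℝ → ℝ) : Prop :=
  ∃ C : ℝ, ∃ k : ℕ, ∀ z, |g z| ≤ C * (1 + |z|) ^ k

@[fun_prop]
lemma hasPolynomialGrowth_const (c : ℝ) : HasPolynomialGrowth fun _ => c :=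
  ⟨|c|, 0, fun _ => by simp⟩

@[fun_prop]
lemma hasPolynomialGrowth_id : HasPolynomialGrowth fun z => z :=
  ⟨1, 1, fun z => by simp⟩

namespace HasPolynomialGrowth

variable {f g : ℝ → ℝ}

lemma exists_nonneg (hf : HasPolynomialGrowth f) :
    ∃ C : ℝ, 0 ≤ C ∧ ∃ k : ℕ, ∀ z, |f z| ≤ C * (1 + |z|) ^ k := by
  obtain ⟨C, k, h⟩ := hf
  exact ⟨C, by simpa using (abs_nonneg _).trans (h 0), k, h⟩

@[fun_prop]
lemma abs (hf : HasPolynomialGrowth f) : HasPolynomialGrowth fun z => |f z| := by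
  simpa [HasPolynomialGrowth] using hf

@[fun_prop]
lemma neg (hf : HasPolynomialGrowth f) : HasPolynomialGrowth fun z => -f z := by
  simpa [HasPolynomialGrowth] using hf

@[fun_prop]
lemma add (hf : HasPolynomialGrowth f) (hg : HasPolynomialGrowth g) :
    HasPolynomialGrowth fun z => f z + g z := by
  obtain ⟨C, hC, k, hfk⟩ := hf.exists_nonneg
  obtain ⟨D, hD, l, hgl⟩ := hg.exists_nonneg
  refine ⟨C + D, max k l, fun z => ?_⟩
  have h1 : (1 : ℝ) ≤ 1 + |z| := by simp
  calc |f z + g z| ≤ |f z| + |g z| := abs_add_le _ _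
    _ ≤ C * (1 + |z|) ^ k + D * (1 + |z|) ^ l := add_le_add (hfk z) (hgl z)
    _ ≤ C * (1 + |z|) ^ max k l + D * (1 + |z|) ^ max k l := by
      gcongr <;> first | exact h1 | simp
    _ = (C + D) * (1 + |z|) ^ max k l := by ring

@[fun_prop]
lemma sub (hf : HasPolynomialGrowth f) (hg : HasPolynomialGrowth g) :
    HasPolynomialGrowth fun z => f z - g z := by
  simpa only [sub_eq_add_neg] using hf.add hg.neg

@[fun_prop]
lemma mul (hf : HasPolynomialGrowth f) (hg : HasPolynomialGrowth g) :
    HasPolynomialGrowth fun z => f z * g z := by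
  obtain ⟨C, k, hfk⟩ := hf
  obtain ⟨D, l, hgl⟩ := hg
  refine ⟨C * D, k + l, fun z => ?_⟩
  calc |f z * g z| = |f z| * |g z| := abs_mul _ _
    _ ≤ (C * (1 + |z|) ^ k) * (D * (1 + |z|) ^ l) :=
      mul_le_mul (hfk z) (hgl z) (abs_nonneg _) ((abs_nonneg _).trans (hfk z))
    _ = C * D * (1 + |z|) ^ (k + l) := by ring

@[fun_prop]
lemma pow (hf : HasPolynomialGrowth f) (n : ℕ) : HasPolynomialGrowth fun z => f z ^ n := by
  induction n with
  | zero => simpa using hasPolynomialGrowth_const 1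
  | succ n ih => simpa only [pow_succ] using ih.mul hf

@[fun_prop]
lemma div_const (hf : HasPolynomialGrowth f) (c : ℝ) : HasPolynomialGrowth fun z => f z / c := by
  simpa only [div_eq_mul_inv] using hf.mul (hasPolynomialGrowth_const c⁻¹)

end HasPolynomialGrowth

lemma integrable_one_add_abs_pow_mul_exp_neg_mul_sq {b : ℝ} (hb : 0 < b) (k : ℕ) :
    Integrable fun z : ℝ => (1 + |z|) ^ k * exp (-b * z ^ 2) := by
  have h_pow : Integrable fun z : ℝ => |z| ^ k * exp (-b * z ^ 2) := by
    refine (integrable_rpow_mul_exp_neg_mul_sq hb (s := k)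
      (neg_one_lt_zero.trans_le k.cast_nonneg)).abs.congr (ae_of_all _ fun z => ?_)
    simp [abs_mul, rpow_natCast, abs_pow]
  refine (((integrable_exp_neg_mul_sq hb).add h_pow).const_mul (2 ^ (k - 1))).mono'
    (by fun_prop) (ae_of_all _ fun z => ?_)
  rw [norm_of_nonneg (by positivity)]
  calc (1 + |z|) ^ k * exp (-b * z ^ 2)
      ≤ 2 ^ (k - 1) * (1 ^ k + |z| ^ k) * exp (-b * z ^ 2) := by
        gcongr; exact add_pow_le zero_le_one (abs_nonneg z) k
    _ = 2 ^ (k - 1) * (exp (-b * z ^ 2) + |z| ^ k * exp (-b * z ^ 2)) := by ring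

lemma integrable_one_add_abs_pow_mul_exp_neg_mul_sub_sq {b : ℝ} (hb : 0 < b) (μ : ℝ) (k : ℕ) :
    Integrable fun z : ℝ => (1 + |z|) ^ k * exp (-b * (z - μ) ^ 2) := by
  refine (((integrable_one_add_abs_pow_mul_exp_neg_mul_sq hb k).comp_sub_right μ).const_mul
    ((1 + |μ|) ^ k)).mono' (by fun_prop) (ae_of_all _ fun z => ?_)
  rw [norm_of_nonneg (by positivity), ← mul_assoc, ← mul_pow]
  gcongr
  nlinarith [abs_sub_abs_le_abs_sub z μ, abs_nonneg μ, abs_nonneg (z - μ)]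

lemma gauss1D_nonneg (μ v z : ℝ) : 0 ≤ gauss1D μ v z := by
  unfold gauss1D; positivity

@[fun_prop]
lemma continuous_gauss1D (μ v : ℝ) : Continuous (gauss1D μ v) := by
  unfold gauss1D; fun_prop

lemma HasPolynomialGrowth.integrable_mul_gauss1D {g : ℝ → ℝ} (hg : HasPolynomialGrowth g)
    (hgm : AEStronglyMeasurable g) (μ : ℝ) {v : ℝ} (hv : 0 < v) :
    Integrable fun z => g z * gauss1D μ v z := by
  obtain ⟨C, k, hgk⟩ := hg
  refine ((integrable_one_add_abs_pow_mul_exp_neg_mul_sub_sq (b := (2 * v)⁻¹) (by positivity) μ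
    k).const_mul (C * (√(2 * π * v))⁻¹)).mono' (hgm.mul (by fun_prop)) (ae_of_all _ fun z => ?_)
  rw [norm_mul, norm_of_nonneg (gauss1D_nonneg μ v z), gauss1D]
  calc |g z| * ((√(2 * π * v))⁻¹ * exp (-(z - μ) ^ 2 / (2 * v)))
      ≤ C * (1 + |z|) ^ k * ((√(2 * π * v))⁻¹ * exp (-(z - μ) ^ 2 / (2 * v))) := by
        gcongr; exact hgk z
    _ = _ := by ring_nf

lemma HasPolynomialGrowth.integrable_mul_gauss1D_mul {g r : ℝ → ℝ} (hg : HasPolynomialGrowth g)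
    (hgm : AEStronglyMeasurable g) (hr : HasPolynomialGrowth r) (hrm : AEStronglyMeasurable r)
    (μ : ℝ) {v : ℝ} (hv : 0 < v) :
    Integrable fun z => g z * (gauss1D μ v z * r z) :=
  ((hg.mul hr).integrable_mul_gauss1D (hgm.mul hrm) μ hv).congr (ae_of_all _ fun _ => by ring)

lemma hasDerivAt_gauss1D (μ : ℝ) {v : ℝ} (hv : v ≠ 0) (z : ℝ) :
    HasDerivAt (gauss1D μ v) (gauss1D μ v z * ((μ - z) / v)) z := by
  refine ((((hasDerivAt_id' z).sub_const μ).fun_pow 2).fun_neg.div_const (2 * v)).exp.const_mul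
    (√(2 * π * v))⁻¹ |>.congr_deriv ?_
  rw [gauss1D]
  field_simp
  ring

lemma hasDerivAt_gauss1D_mul (μ : ℝ) {v : ℝ} (hv : v ≠ 0) (z : ℝ) :
    HasDerivAt (fun z => gauss1D μ v z * ((μ - z) / v))
      (gauss1D μ v z * (((z - μ) ^ 2 - v) / v ^ 2)) z := by
  refine (hasDerivAt_gauss1D μ hv z).fun_mul (((hasDerivAt_id' z).const_sub μ).div_const v)
    |>.congr_deriv ?_
  field_simp
  ring

lemma hasDerivAt_gauss1D_variance (μ z : ℝ) {s : ℝ} (hs : 0 < s) :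
    HasDerivAt (fun s => gauss1D μ s z) (gauss1D μ s z * (((z - μ) ^ 2 - s) / (2 * s ^ 2))) s := by
  have h2πs : 0 < 2 * π * s := by positivity
  have hsqrt := (((hasDerivAt_id' s).const_mul (2 * π)).sqrt h2πs.ne').fun_inv
    (sqrt_pos.2 h2πs).ne'
  have hexp := ((hasDerivAt_const s (-(z - μ) ^ 2)).fun_div ((hasDerivAt_id' s).const_mul 2)
    (by positivity)).exp
  refine (hsqrt.fun_mul hexp).congr_deriv ?_
  rw [gauss1D, sq_sqrt h2πs.le]
  field_simp
  ring

lemma gauss1D_le_sqrt_div_mul_gauss1D (μ z : ℝ) {s w : ℝ} (hs : 0 < s) (hsw : s ≤ w) :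
    gauss1D μ s z ≤ √(w / s) * gauss1D μ w z := by
  have hw : 0 < w := hs.trans_le hsw
  have h_const : (√(2 * π * s))⁻¹ = √(w / s) * (√(2 * π * w))⁻¹ := by
    rw [← sqrt_inv, ← sqrt_inv, ← sqrt_mul (by positivity)]
    congr 1
    field_simp
  rw [gauss1D, gauss1D, h_const, mul_assoc]
  gcongr _ * (_ * exp ?_)
  rw [neg_div, neg_div, neg_le_neg_iff]
  gcongr

lemma hasDerivAt_integral_mul_gauss1D_variance {f : ℝ → ℝ} (hf : HasPolynomialGrowth f)
    (hfm : AEStronglyMeasurable f) (μ : ℝ) {v : ℝ} (hv : 0 < v) :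
    HasDerivAt (fun s => ∫ z, f z * gauss1D μ s z)
      (∫ z, f z * (gauss1D μ v z * (((z - μ) ^ 2 - v) / (2 * v ^ 2)))) v := by
  have h_ball : ∀ s ∈ Metric.ball v (v / 2), v / 2 < s ∧ s < 3 * v / 2 := fun s hs => by
    rw [Metric.mem_ball, Real.dist_eq, abs_lt] at hs
    constructor <;> linarith
  have h_factor : ∀ z, ∀ s ∈ Metric.ball v (v / 2),
      |((z - μ) ^ 2 - s) / (2 * s ^ 2)| ≤ ((z - μ) ^ 2 + 2 * v) / (v ^ 2 / 2) := fun z s hs => by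
    obtain ⟨hs₁, hs₂⟩ := h_ball s hs
    have hs₀ : 0 < s := by linarith
    rw [abs_div, abs_of_pos (by positivity : (0 : ℝ) < 2 * s ^ 2)]
    refine div_le_div₀ (by positivity) ?_ (by positivity) (by nlinarith)
    rw [abs_le]
    constructor <;> nlinarith [sq_nonneg (z - μ)]
  have h_gauss : ∀ z, ∀ s ∈ Metric.ball v (v / 2), gauss1D μ s z ≤ √3 * gauss1D μ (3 * v / 2) z :=
    fun z s hs => by
      obtain ⟨hs₁, hs₂⟩ := h_ball s hs
      refine (gauss1D_le_sqrt_div_mul_gauss1D μ z (by linarith) hs₂.le).trans ?_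
      refine mul_le_mul_of_nonneg_right (sqrt_le_sqrt ?_) (gauss1D_nonneg _ _ _)
      rw [div_le_iff₀ (by linarith)]
      linarith
  have h_bound : ∀ z, ∀ s ∈ Metric.ball v (v / 2),
      ‖f z * (gauss1D μ s z * (((z - μ) ^ 2 - s) / (2 * s ^ 2)))‖ ≤
        √3 * (|f z| * (((z - μ) ^ 2 + 2 * v) / (v ^ 2 / 2)) * gauss1D μ (3 * v / 2) z) :=
    fun z s hs => by
      rw [norm_mul, norm_mul, norm_of_nonneg (gauss1D_nonneg μ s z), Real.norm_eq_abs,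
        Real.norm_eq_abs]
      calc |f z| * (gauss1D μ s z * |((z - μ) ^ 2 - s) / (2 * s ^ 2)|)
          ≤ |f z| * ((√3 * gauss1D μ (3 * v / 2) z) * (((z - μ) ^ 2 + 2 * v) / (v ^ 2 / 2))) := by
            have := gauss1D_nonneg μ (3 * v / 2) z
            gcongr
            exacts [h_gauss z s hs, h_factor z s hs]
        _ = _ := by ring
  refine (hasDerivAt_integral_of_dominated_loc_of_deriv_le (Metric.ball_mem_nhds v (by positivity))
    (.of_forall fun s => hfm.mul (by fun_prop)) (hf.integrable_mul_gauss1D hfm μ hv)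
    (hfm.mul (by fun_prop)) (ae_of_all _ h_bound) ?_ (ae_of_all _ fun z s hs => ?_)).2
  · exact ((hf.abs.mul (by fun_prop)).integrable_mul_gauss1D (hfm.norm.mul (by fun_prop)) μ
      (by positivity)).const_mul _
  · exact (hasDerivAt_gauss1D_variance μ z (by linarith [h_ball s hs])).const_mul (f z)

lemma integral_mul_deriv_deriv_eq_deriv_deriv_mul {u u' u'' w w' w'' : ℝ → ℝ}
    (hu : ∀ x, HasDerivAt u (u' x) x) (hu' : ∀ x, HasDerivAt u' (u'' x) x)
    (hw : ∀ x, HasDerivAt w (w' x) x) (hw' : ∀ x, HasDerivAt w' (w'' x) x)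
    (huw'' : Integrable (u * w'')) (hu'w' : Integrable (u' * w')) (huw' : Integrable (u * w'))
    (hu''w : Integrable (u'' * w)) (hu'w : Integrable (u' * w)) :
    ∫ x, u x * w'' x = ∫ x, u'' x * w x := by
  rw [integral_mul_deriv_eq_deriv_mul_of_integrable (fun x _ => hu x) (fun x _ => hw' x)
      huw'' hu'w' huw',
    integral_mul_deriv_eq_deriv_mul_of_integrable (fun x _ => hu' x) (fun x _ => hw x)
      hu'w' hu''w hu'w, neg_neg]

lemma integral_mul_gauss1D_second_deriv {f : ℝ → ℝ} (hf : ContDiff ℝ 2 f)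
    (hf0 : HasPolynomialGrowth f) (hf1 : HasPolynomialGrowth (deriv f))
    (hf2 : HasPolynomialGrowth (deriv (deriv f))) (μ : ℝ) {v : ℝ} (hv : 0 < v) :
    ∫ z, f z * (gauss1D μ v z * (((z - μ) ^ 2 - v) / v ^ 2)) =
      ∫ z, deriv (deriv f) z * gauss1D μ v z := by
  have hf' : ContDiff ℝ 1 (deriv f) := hf.deriv'
  have hm0 : AEStronglyMeasurable f := hf.continuous.aestronglyMeasurable
  have hm1 : AEStronglyMeasurable (deriv f) := hf'.continuous.aestronglyMeasurable
  have hm2 : AEStronglyMeasurable (deriv (deriv f)) :=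
    hf'.continuous_deriv_one.aestronglyMeasurable
  exact integral_mul_deriv_deriv_eq_deriv_deriv_mul
    (fun x => (hf.differentiable (by norm_num) x).hasDerivAt)
    (fun x => (hf'.differentiable one_ne_zero x).hasDerivAt)
    (hasDerivAt_gauss1D μ hv.ne') (hasDerivAt_gauss1D_mul μ hv.ne')
    (hf0.integrable_mul_gauss1D_mul hm0 (by fun_prop) (by fun_prop) μ hv)
    (hf1.integrable_mul_gauss1D_mul hm1 (by fun_prop) (by fun_prop) μ hv)
    (hf0.integrable_mul_gauss1D_mul hm0 (by fun_prop) (by fun_prop) μ hv)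
    (hf2.integrable_mul_gauss1D hm2 μ hv) (hf1.integrable_mul_gauss1D hm1 μ hv)

/-- Price's theorem in one dimension: for `f` twice continuously differentiable
with polynomially bounded `f, f', f''`,
`∂/∂(σ²) E_{z∼N(μ,σ²)}[f(z)] = (1/2) E_{z∼N(μ,σ²)}[f''(z)]`. -/
theorem price_theorem_1d (f : ℝ → ℝ) (hf : ContDiff ℝ 2 f)
    (hf0 : ∃ C k, ∀ z, |f z| ≤ C * (1 + |z|) ^ k)
    (hf1 : ∃ C k, ∀ z, |deriv f z| ≤ C * (1 + |z|) ^ k)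
    (hf2 : ∃ C k, ∀ z, |deriv (deriv f) z| ≤ C * (1 + |z|) ^ k)
    (μ : ℝ) :
    ∀ v : ℝ, 0 < v →
      HasDerivAt (fun s => ∫ z, f z * gauss1D μ s z)
        ((1 / 2) * ∫ z, deriv (deriv f) z * gauss1D μ v z) v := by
  intro v hv
  convert hasDerivAt_integral_mul_gauss1D_variance hf0 hf.continuous.aestronglyMeasurable μ hv
    using 1
  rw [← integral_mul_gauss1D_second_deriv hf hf0 hf1 hf2 μ hv, ← integral_const_mul]
  congr 1 with z
  ring
end

section
/- Let ρ̄ be a probability density, η ∈ (0,1), and ρ⁺(λ) ∝ ρ̄(λ)exp(−η g(λ)) the entropic mirror-descent iterate with g = δL(ρ̄). If L satisfies the relative smoothness bound L(ρ') − L(ρ̄) ≤ ∫ g·(ρ' − ρ̄) + KL(ρ', ρ̄) for all ρ', then L(ρ⁺) − L(ρ̄) ≤ −(1/η − 1)·KL(ρ⁺, ρ̄) − KL(ρ̄, ρ⁺). -/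
open MeasureTheory

/-- KL divergence between two densities, `KL(p, q) = ∫ p log(p/q)`. -/
noncomputable def KLdiv {X : Type*} [MeasureSpace X] (p q : X → ℝ) : ℝ :=
  ∫ x, p x * Real.log (p x / q x)

/-!
Writing `ρ⁺ = ρ̄ exp(-η g) / Z`, the log-ratio `log (ρ⁺/ρ̄)` equals `-η g - log Z` wherever
`ρ̄ ≠ 0`, while `ρ⁺ - ρ̄` vanishes where `ρ̄ = 0`. Since `KL(ρ⁺, ρ̄) + KL(ρ̄, ρ⁺) = ∫ (ρ⁺ - ρ̄) log (ρ⁺/ρ̄)`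
and `∫ (ρ⁺ - ρ̄) = 0`, this gives `η ∫ g (ρ⁺ - ρ̄) = -KL(ρ⁺, ρ̄) - KL(ρ̄, ρ⁺)`. Substituting into
the relative smoothness bound at `ρ' = ρ⁺` and using `KL(ρ̄, ρ⁺) ≥ 0`, `η ≤ 1` gives the claim.
-/

namespace Real

theorem mul_log_div_add_mul_log_div (p q : ℝ) :
    p * log (p / q) + q * log (q / p) = (p - q) * log (p / q) := by
  rw [← inv_div p q, log_inv]
  ring

theorem sub_le_mul_log_div {p q : ℝ} (hp : 0 ≤ p) (hq : 0 ≤ q) (hpq : 0 < p → 0 < q) :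
    p - q ≤ p * log (p / q) := by
  rcases hp.eq_or_lt with rfl | hp
  · simpa using hq
  have h := mul_le_mul_of_nonneg_left (one_sub_inv_le_log_of_pos (div_pos hp (hpq hp))) hp.le
  rwa [inv_div, mul_sub, mul_one, mul_div_cancel₀ _ hp.ne'] at h

end Real

section KLdiv

variable {Ω : Type*} [MeasureSpace Ω]

theorem KLdiv_add_KLdiv {p q : Ω → ℝ}
    (hpq : Integrable (fun x => p x * Real.log (p x / q x)))
    (hqp : Integrable (fun x => q x * Real.log (q x / p x))) :
    KLdiv p q + KLdiv q p = ∫ x, (p x - q x) * Real.log (p x / q x) := by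
  simp only [KLdiv, ← integral_add hpq hqp, Real.mul_log_div_add_mul_log_div]

theorem KLdiv_nonneg {p q : Ω → ℝ} (hp : Integrable p) (hq : Integrable q)
    (hp0 : ∀ x, 0 ≤ p x) (hq0 : ∀ x, 0 ≤ q x) (hpq : ∀ x, 0 < p x → 0 < q x)
    (hmass : ∫ x, q x ≤ ∫ x, p x)
    (hint : Integrable (fun x => p x * Real.log (p x / q x))) :
    0 ≤ KLdiv p q := by
  have h : ∫ x, (p x - q x) ≤ ∫ x, p x * Real.log (p x / q x) :=
    integral_mono (hp.sub hq) hint fun x => Real.sub_le_mul_log_div (hp0 x) (hq0 x) (hpq x)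
  rw [integral_sub hp hq] at h
  exact (sub_nonneg.2 hmass).trans h

/-- First-order optimality of the entropic mirror-descent step `ρ⁺ ∝ ρ̄ exp(-η g)`. -/
theorem mul_integral_mul_sub_eq_neg_KLdiv_add_KLdiv {ρbar ρplus g : Ω → ℝ} {η Z : ℝ}
    (hZ : Z ≠ 0) (hρplus : ∀ x, ρplus x = ρbar x * Real.exp (-η * g x) / Z)
    (hρbar_int : Integrable ρbar) (hρplus_int : Integrable ρplus)
    (hmass : ∫ x, ρplus x = ∫ x, ρbar x)
    (hKL1 : Integrable (fun x => ρplus x * Real.log (ρplus x / ρbar x)))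
    (hKL2 : Integrable (fun x => ρbar x * Real.log (ρbar x / ρplus x)))
    (hint : Integrable (fun x => g x * (ρplus x - ρbar x))) :
    η * ∫ x, g x * (ρplus x - ρbar x) = -(KLdiv ρplus ρbar + KLdiv ρbar ρplus) := by
  have hlog : ∀ x, (ρplus x - ρbar x) * Real.log (ρplus x / ρbar x)
      = -η * (g x * (ρplus x - ρbar x)) - Real.log Z * (ρplus x - ρbar x) := by
    intro x
    by_cases h0 : ρbar x = 0
    · simp [hρplus x, h0]
    · rw [hρplus x, mul_div_assoc, mul_div_cancel_left₀ _ h0,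
        Real.log_div (Real.exp_ne_zero _) hZ, Real.log_exp]
      ring
  have hdiff : Integrable (fun x => ρplus x - ρbar x) := hρplus_int.sub hρbar_int
  rw [KLdiv_add_KLdiv hKL1 hKL2, integral_congr_ae (.of_forall hlog),
    integral_sub (hint.const_mul _) (hdiff.const_mul _),
    integral_const_mul, integral_const_mul, integral_sub hρplus_int hρbar_int, hmass]
  ring

end KLdiv

theorem mirror_descent_decrease_general {Ω : Type*} [MeasureSpace Ω]
    (L : (Ω → ℝ) → ℝ) (ρbar g : Ω → ℝ) (η : ℝ) (hη : 0 < η) (hη1 : η < 1)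
    (hρbar0 : ∀ l, 0 ≤ ρbar l) (hρbar1 : ∫ l, ρbar l = 1)
    (Z : ℝ)
    (ρplus : Ω → ℝ) (hρplus : ∀ l, ρplus l = ρbar l * Real.exp (-η * g l) / Z)
    (hKL1 : Integrable (fun l => ρplus l * Real.log (ρplus l / ρbar l)))
    (hKL2 : Integrable (fun l => ρbar l * Real.log (ρbar l / ρplus l)))
    (hint : Integrable (fun l => g l * (ρplus l - ρbar l)))
    (hsmooth : ∀ ρ' : Ω → ℝ, Measurable ρ' → (∀ l, 0 ≤ ρ' l) → (∫ l, ρ' l = 1) →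
      Integrable (fun l => g l * (ρ' l - ρbar l)) →
      Integrable (fun l => ρ' l * Real.log (ρ' l / ρbar l)) →
      L ρ' - L ρbar ≤ (∫ l, g l * (ρ' l - ρbar l)) + KLdiv ρ' ρbar)
    (hρplusmeas : Measurable ρplus) (hρplus0 : ∀ l, 0 ≤ ρplus l)
    (hρplus1 : ∫ l, ρplus l = 1) :
    L ρplus - L ρbar ≤ -(1 / η - 1) * KLdiv ρplus ρbar - KLdiv ρbar ρplus := by
  have hρbar_int : Integrable ρbar := .of_integral_ne_zero (by simp [hρbar1])
  have hρplus_int : Integrable ρplus := .of_integral_ne_zero (by simp [hρplus1])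
  have hZ : Z ≠ 0 := by
    rintro rfl
    simp [hρplus] at hρplus1
  have hsupp : ∀ l, 0 < ρbar l → 0 < ρplus l := fun l h =>
    (hρplus0 l).lt_of_ne' (by rw [hρplus l]; positivity)
  have hK2 : 0 ≤ KLdiv ρbar ρplus :=
    KLdiv_nonneg hρbar_int hρplus_int hρbar0 hρplus0 hsupp (by rw [hρbar1, hρplus1]) hKL2
  have hoptimality := mul_integral_mul_sub_eq_neg_KLdiv_add_KLdiv hZ hρplus hρbar_int hρplus_int
    (by rw [hρbar1, hρplus1]) hKL1 hKL2 hint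
  have hstep := hsmooth ρplus hρplusmeas hρplus0 hρplus1 hint hKL1
  have hI : ∫ l, g l * (ρplus l - ρbar l) = -(1 / η) * (KLdiv ρplus ρbar + KLdiv ρbar ρplus) := by
    field_simp
    linarith
  have hK2η : KLdiv ρbar ρplus ≤ 1 / η * KLdiv ρbar ρplus :=
    le_mul_of_one_le_left hK2 ((one_le_div hη).2 hη1.le)
  rw [hI] at hstep
  linarith

/-- Mirror-descent decrease lemma: if `ρ⁺ ∝ ρ̄ exp(−η g)` with `g = δL(ρ̄)`,
`η ∈ (0,1)`, and `L` satisfies the relative smoothness bound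
`L(ρ') − L(ρ̄) ≤ ∫ g (ρ' − ρ̄) + KL(ρ', ρ̄)` for all probability densities `ρ'`,
then `L(ρ⁺) − L(ρ̄) ≤ −(1/η − 1) KL(ρ⁺, ρ̄) − KL(ρ̄, ρ⁺)`. -/
theorem mirror_descent_decrease {Ω : Type*} [MeasureSpace Ω]
    (L : (Ω → ℝ) → ℝ) (ρbar g : Ω → ℝ) (η : ℝ) (hη : 0 < η) (hη1 : η < 1)
    (hρbar : Measurable ρbar) (hρbar0 : ∀ l, 0 ≤ ρbar l) (hρbar1 : ∫ l, ρbar l = 1)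
    (hg : Measurable g) (hgbd : ∃ C, ∀ l, |g l| ≤ C)
    (Z : ℝ) (hZ : Z = ∫ l, ρbar l * Real.exp (-η * g l))
    (ρplus : Ω → ℝ) (hρplus : ∀ l, ρplus l = ρbar l * Real.exp (-η * g l) / Z)
    (hKL1 : Integrable (fun l => ρplus l * Real.log (ρplus l / ρbar l)))
    (hKL2 : Integrable (fun l => ρbar l * Real.log (ρbar l / ρplus l)))
    (hint : Integrable (fun l => g l * (ρplus l - ρbar l)))
    (hsmooth : ∀ ρ' : Ω → ℝ, Measurable ρ' → (∀ l, 0 ≤ ρ' l) → (∫ l, ρ' l = 1) →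
      Integrable (fun l => g l * (ρ' l - ρbar l)) →
      Integrable (fun l => ρ' l * Real.log (ρ' l / ρbar l)) →
      L ρ' - L ρbar ≤ (∫ l, g l * (ρ' l - ρbar l)) + KLdiv ρ' ρbar)
    (hρplusmeas : Measurable ρplus) (hρplus0 : ∀ l, 0 ≤ ρplus l)
    (hρplus1 : ∫ l, ρplus l = 1) :
    L ρplus - L ρbar ≤ -(1 / η - 1) * KLdiv ρplus ρbar - KLdiv ρbar ρplus :=
  mirror_descent_decrease_general L ρbar g η hη hη1 hρbar0 hρbar1 Z ρplus hρplus hKL1 hKL2 hint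
    hsmooth hρplusmeas hρplus0 hρplus1
end
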